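/- Let l be a positive integer. Then ψ⁴ = L_{(0,0,1)}, for every γ ∈ N'_{2l} one has ψ ∘ L_γ ∘ ψ⁻¹ = L_{γ'} for some γ' ∈ N'_{2l}, and the subgroup T' = {L_γ : γ ∈ N'_{2l}} is a normal subgroup of Γ'_{2l,π/2} of index 4. -/

import Mathlib

noncomputable section

abbrev H3 := ℝ × ℝ × ℝ

/-- polarized Heisenberg multiplication -/
def Hmul (a b : H3) : H3 := (a.1 + b.1, a.2.1 + b.2.1, a.2.2 + b.2.2 + a.1 * b.2.1)

/-- left translation L_γ : h ↦ γ ⋆ h as a bijection of ℍ -/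
def Ltrans (γ : H3) : Equiv.Perm H3 where
  toFun x := Hmul γ x
  invFun x := (x.1 - γ.1, x.2.1 - γ.2.1, x.2.2 - γ.2.2 - γ.1 * (x.2.1 - γ.2.1))
  left_inv := by
    rintro ⟨a, b, c⟩
    simp only [Hmul, Prod.mk.injEq]
    refine ⟨by ring, by ring, by ring⟩
  right_inv := by
    rintro ⟨a, b, c⟩
    simp only [Hmul, Prod.mk.injEq]
    refine ⟨by ring, by ring, by ring⟩

/-- the map ψ(p,q,s) = (−q, p, s + 1/4 − pq) as a bijection of ℍ -/
def psiPerm : Equiv.Perm H3 where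
  toFun x := (-x.2.1, x.1, x.2.2 + 1 / 4 - x.1 * x.2.1)
  invFun x := (x.2.1, -x.1, x.2.2 - 1 / 4 - x.1 * x.2.1)
  left_inv := by
    rintro ⟨a, b, c⟩
    simp only [Prod.mk.injEq]
    refine ⟨trivial, by ring, by ring⟩
  right_inv := by
    rintro ⟨a, b, c⟩
    simp only [Prod.mk.injEq]
    refine ⟨by ring, trivial, by ring⟩

/-- the lattice N'_{2l} = √(2l)ℤ × √(2l)ℤ × ℤ -/
def N2l' (l : ℕ) : Set H3 :=
  {x | ∃ a b c : ℤ,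
    x = (Real.sqrt (2 * l) * (a : ℝ), Real.sqrt (2 * l) * (b : ℝ), (c : ℝ))}

/-- the Heisenberg Bieberbach group Γ'_{2l,π/2}, generated by translations by N'_{2l} and ψ -/
def Gamma2lpihalf' (l : ℕ) : Subgroup (Equiv.Perm H3) :=
  Subgroup.closure ((Ltrans '' N2l' l) ∪ {psiPerm})


-- ===== auxiliary lemmas =====

lemma Ltrans_apply (γ x : H3) : Ltrans γ x = Hmul γ x := rfl

lemma psiPerm_apply (x : H3) :
    psiPerm x = (-x.2.1, x.1, x.2.2 + 1 / 4 - x.1 * x.2.1) := rfl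

lemma Ltrans_mul (γ δ : H3) : Ltrans γ * Ltrans δ = Ltrans (Hmul γ δ) := by
  refine Equiv.ext fun x => ?_
  simp only [Equiv.Perm.mul_apply, Ltrans_apply, Hmul, Prod.mk.injEq]
  refine ⟨by ring, by ring, by ring⟩

lemma Ltrans_zero : Ltrans ((0:ℝ), (0:ℝ), (0:ℝ)) = 1 := by
  refine Equiv.ext fun x => ?_
  simp only [Ltrans_apply, Hmul, Equiv.Perm.one_apply]
  obtain ⟨a, b, c⟩ := x
  simp only [Prod.mk.injEq]
  refine ⟨by ring, by ring, by ring⟩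

/-- inverse in the polarized Heisenberg group -/
def Hinv (γ : H3) : H3 := (-γ.1, -γ.2.1, -γ.2.2 + γ.1 * γ.2.1)

lemma Ltrans_inv (γ : H3) : (Ltrans γ)⁻¹ = Ltrans (Hinv γ) := by
  rw [inv_eq_iff_mul_eq_one, Ltrans_mul]
  have h : Hmul γ (Hinv γ) = ((0:ℝ),(0:ℝ),(0:ℝ)) := by
    simp only [Hmul, Hinv, Prod.mk.injEq]
    refine ⟨by ring, by ring, by ring⟩
  rw [h, Ltrans_zero]

/-- the rotation part of conjugation by ψ -/
def Hsig (γ : H3) : H3 := (-γ.2.1, γ.1, γ.2.2 - γ.1 * γ.2.1)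

/-- the rotation part of conjugation by ψ⁻¹ -/
def Hsiginv (γ : H3) : H3 := (γ.2.1, -γ.1, γ.2.2 - γ.1 * γ.2.1)

lemma psi_conj (γ : H3) : psiPerm * Ltrans γ * psiPerm⁻¹ = Ltrans (Hsig γ) := by
  rw [mul_inv_eq_iff_eq_mul]
  refine Equiv.ext fun x => ?_
  simp only [Equiv.Perm.mul_apply, Ltrans_apply, psiPerm_apply, Hmul, Hsig, Prod.mk.injEq]
  refine ⟨by ring, trivial, by ring⟩

lemma Hsig_Hsiginv (γ : H3) : Hsig (Hsiginv γ) = γ := by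
  obtain ⟨p, q, s⟩ := γ
  simp only [Hsig, Hsiginv, Prod.mk.injEq]
  refine ⟨by ring, trivial, by ring⟩

lemma psi_inv_conj (γ : H3) : psiPerm⁻¹ * Ltrans γ * psiPerm = Ltrans (Hsiginv γ) := by
  have h := psi_conj (Hsiginv γ)
  rw [Hsig_Hsiginv] at h
  rw [← h]
  group

lemma psi_pow_four : psiPerm ^ 4 = Ltrans ((0:ℝ), (0:ℝ), (1:ℝ)) := by
  refine Equiv.ext fun x => ?_
  have h : psiPerm ^ 4 = psiPerm * psiPerm * psiPerm * psiPerm := by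
    rw [pow_succ, pow_succ, pow_succ, pow_one]
  rw [h]
  simp only [Equiv.Perm.mul_apply, Ltrans_apply, psiPerm_apply, Hmul, Prod.mk.injEq]
  refine ⟨by ring, by ring, by ring⟩

lemma sqrt_mul_self' (l : ℕ) : Real.sqrt (2 * l) * Real.sqrt (2 * l) = 2 * l :=
  Real.mul_self_sqrt (by positivity)

lemma Hmul_mem {l : ℕ} {γ δ : H3} (hγ : γ ∈ N2l' l) (hδ : δ ∈ N2l' l) :
    Hmul γ δ ∈ N2l' l := by
  obtain ⟨a, b, c, rfl⟩ := hγ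
  obtain ⟨a', b', c', rfl⟩ := hδ
  refine ⟨a + a', b + b', c + c' + 2 * l * a * b', ?_⟩
  simp only [Hmul, Prod.mk.injEq]
  have hsq := sqrt_mul_self' l
  refine ⟨by push_cast; try ring, by push_cast; try ring, ?_⟩
  push_cast
  linear_combination (a : ℝ) * (b' : ℝ) * hsq

lemma Hinv_mem {l : ℕ} {γ : H3} (hγ : γ ∈ N2l' l) : Hinv γ ∈ N2l' l := by
  obtain ⟨a, b, c, rfl⟩ := hγ
  refine ⟨-a, -b, -c + 2 * l * a * b, ?_⟩
  simp only [Hinv, Prod.mk.injEq]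
  have hsq := sqrt_mul_self' l
  refine ⟨by push_cast; try ring, by push_cast; try ring, ?_⟩
  push_cast
  linear_combination (a : ℝ) * (b : ℝ) * hsq

lemma Hsig_mem {l : ℕ} {γ : H3} (hγ : γ ∈ N2l' l) : Hsig γ ∈ N2l' l := by
  obtain ⟨a, b, c, rfl⟩ := hγ
  refine ⟨-b, a, c - 2 * l * a * b, ?_⟩
  simp only [Hsig, Prod.mk.injEq]
  have hsq := sqrt_mul_self' l
  refine ⟨by push_cast; try ring, by push_cast; try ring, ?_⟩
  push_cast
  linear_combination (-(a : ℝ)) * (b : ℝ) * hsq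

lemma Hsiginv_mem {l : ℕ} {γ : H3} (hγ : γ ∈ N2l' l) : Hsiginv γ ∈ N2l' l := by
  obtain ⟨a, b, c, rfl⟩ := hγ
  refine ⟨b, -a, c - 2 * l * a * b, ?_⟩
  simp only [Hsiginv, Prod.mk.injEq]
  have hsq := sqrt_mul_self' l
  refine ⟨by push_cast; try ring, by push_cast; try ring, ?_⟩
  push_cast
  linear_combination (-(a : ℝ)) * (b : ℝ) * hsq

lemma zero_mem_N2l' (l : ℕ) : ((0:ℝ), (0:ℝ), (0:ℝ)) ∈ N2l' l :=
  ⟨0, 0, 0, by push_cast; simp⟩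

lemma center_mem_N2l' (l : ℕ) : ((0:ℝ), (0:ℝ), (1:ℝ)) ∈ N2l' l :=
  ⟨0, 0, 1, by push_cast; simp⟩

/-- the subgroup of translations by `N2l'` -/
def Tsub (l : ℕ) : Subgroup (Equiv.Perm H3) where
  carrier := Ltrans '' N2l' l
  mul_mem' := by
    rintro x y ⟨γ, hγ, rfl⟩ ⟨δ, hδ, rfl⟩
    exact ⟨Hmul γ δ, Hmul_mem hγ hδ, (Ltrans_mul γ δ).symm⟩
  one_mem' := ⟨((0:ℝ),(0:ℝ),(0:ℝ)), zero_mem_N2l' l, Ltrans_zero⟩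
  inv_mem' := by
    rintro x ⟨γ, hγ, rfl⟩
    exact ⟨Hinv γ, Hinv_mem hγ, (Ltrans_inv γ).symm⟩

/-- ψ⁴ is translation by (0,0,1); conjugation by ψ maps translations by
N'_{2l} to translations by N'_{2l}; and T' = {L_γ : γ ∈ N'_{2l}} is a normal subgroup
of Γ'_{2l,π/2} of index 4. -/
theorem Gamma2lpihalf'_structure (l : ℕ) (hl : 0 < l) :
    psiPerm ^ 4 = Ltrans (0, 0, 1) ∧
    (∀ γ ∈ N2l' l, ∃ γ' ∈ N2l' l,
      psiPerm * Ltrans γ * psiPerm⁻¹ = Ltrans γ') ∧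
    (∃ T : Subgroup (Equiv.Perm H3), (T : Set (Equiv.Perm H3)) = Ltrans '' N2l' l ∧
      T ≤ Gamma2lpihalf' l ∧ (T.subgroupOf (Gamma2lpihalf' l)).Normal ∧
      (T.subgroupOf (Gamma2lpihalf' l)).index = 4) := by
  constructor
  · exact psi_pow_four
  constructor
  · intro γ hγ
    exact ⟨Hsig γ, Hsig_mem hγ, psi_conj γ⟩
  refine ⟨Tsub l, rfl, ?_, ?_, ?_⟩
  · -- T ≤ Γ
    rintro x ⟨γ, hγ, rfl⟩
    exact Subgroup.subset_closure (Or.inl ⟨γ, hγ, rfl⟩)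
  · -- normality
    have key : ∀ g ∈ Gamma2lpihalf' l,
        ∀ t ∈ Tsub l, g * t * g⁻¹ ∈ Tsub l ∧ g⁻¹ * t * g ∈ Tsub l := by
      intro g hg
      refine Subgroup.closure_induction
        (p := fun x _ => ∀ t ∈ Tsub l, x * t * x⁻¹ ∈ Tsub l ∧ x⁻¹ * t * x ∈ Tsub l)
        ?_ ?_ ?_ ?_ hg
      · rintro x (⟨δ, hδ, rfl⟩ | hx)
        · rintro t ⟨γ, hγ, rfl⟩
          constructor
          · rw [Ltrans_inv, Ltrans_mul, Ltrans_mul]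
            exact ⟨_, Hmul_mem (Hmul_mem hδ hγ) (Hinv_mem hδ), rfl⟩
          · rw [Ltrans_inv, Ltrans_mul, Ltrans_mul]
            exact ⟨_, Hmul_mem (Hmul_mem (Hinv_mem hδ) hγ) hδ, rfl⟩
        · rw [Set.mem_singleton_iff] at hx
          subst hx
          rintro t ⟨γ, hγ, rfl⟩
          exact ⟨psi_conj γ ▸ ⟨_, Hsig_mem hγ, rfl⟩,
                 psi_inv_conj γ ▸ ⟨_, Hsiginv_mem hγ, rfl⟩⟩
      · intro t ht
        constructor <;> simpa using ht
      · intro x y hx hy px py t ht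
        constructor
        · have h1 : x * y * t * (x * y)⁻¹ = x * (y * t * y⁻¹) * x⁻¹ := by group
          rw [h1]
          exact (px _ ((py t ht).1)).1
        · have h1 : (x * y)⁻¹ * t * (x * y) = y⁻¹ * (x⁻¹ * t * x) * y := by group
          rw [h1]
          exact (py _ ((px t ht).2)).2
      · intro x hx px t ht
        refine ⟨?_, ?_⟩
        · simpa using (px t ht).2
        · simpa using (px t ht).1
    constructor
    intro n hn g
    rw [Subgroup.mem_subgroupOf] at hn ⊢
    simpa using (key g.1 g.2 n.1 hn).1
  · -- index
    have hψΓ : psiPerm ∈ Gamma2lpihalf' l :=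
      Subgroup.subset_closure (Or.inr rfl)
    set G' := Gamma2lpihalf' l with hG'
    set K : Subgroup G' := (Tsub l).subgroupOf G' with hK
    haveI hNorm : K.Normal := by
      have key : ∀ g ∈ Gamma2lpihalf' l,
          ∀ t ∈ Tsub l, g * t * g⁻¹ ∈ Tsub l ∧ g⁻¹ * t * g ∈ Tsub l := by
        intro g hg
        refine Subgroup.closure_induction
          (p := fun x _ => ∀ t ∈ Tsub l, x * t * x⁻¹ ∈ Tsub l ∧ x⁻¹ * t * x ∈ Tsub l)
          ?_ ?_ ?_ ?_ hg
        · rintro x (⟨δ, hδ, rfl⟩ | hx)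
          · rintro t ⟨γ, hγ, rfl⟩
            constructor
            · rw [Ltrans_inv, Ltrans_mul, Ltrans_mul]
              exact ⟨_, Hmul_mem (Hmul_mem hδ hγ) (Hinv_mem hδ), rfl⟩
            · rw [Ltrans_inv, Ltrans_mul, Ltrans_mul]
              exact ⟨_, Hmul_mem (Hmul_mem (Hinv_mem hδ) hγ) hδ, rfl⟩
          · rw [Set.mem_singleton_iff] at hx
            subst hx
            rintro t ⟨γ, hγ, rfl⟩
            exact ⟨psi_conj γ ▸ ⟨_, Hsig_mem hγ, rfl⟩,
                   psi_inv_conj γ ▸ ⟨_, Hsiginv_mem hγ, rfl⟩⟩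
        · intro t ht
          constructor <;> simpa using ht
        · intro x y hx hy px py t ht
          constructor
          · have h1 : x * y * t * (x * y)⁻¹ = x * (y * t * y⁻¹) * x⁻¹ := by group
            rw [h1]
            exact (px _ ((py t ht).1)).1
          · have h1 : (x * y)⁻¹ * t * (x * y) = y⁻¹ * (x⁻¹ * t * x) * y := by group
            rw [h1]
            exact (py _ ((px t ht).2)).2
        · intro x hx px t ht
          refine ⟨?_, ?_⟩
          · simpa using (px t ht).2
          · simpa using (px t ht).1
      constructor
      intro n hn g
      rw [Subgroup.mem_subgroupOf] at hn ⊢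
      simpa using (key g.1 g.2 n.1 hn).1
    set ψ' : G' := ⟨psiPerm, hψΓ⟩ with hψ'
    set q : G' ⧸ K := QuotientGroup.mk ψ' with hq
    -- every element of the quotient is a power of q
    have htop : ∀ z : G' ⧸ K, z ∈ Subgroup.zpowers q := by
      intro z
      induction z using QuotientGroup.induction_on with
      | H x =>
        obtain ⟨x, hx⟩ := x
        refine Subgroup.closure_induction
          (p := fun y _ => ∀ h' : y ∈ G',
            (QuotientGroup.mk (⟨y, h'⟩ : G') : G' ⧸ K) ∈ Subgroup.zpowers q)
          ?_ ?_ ?_ ?_ hx hx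
        · rintro y (⟨γ, hγ, rfl⟩ | hy) h'
          · have h1 : (QuotientGroup.mk (⟨Ltrans γ, h'⟩ : G') : G' ⧸ K) = 1 := by
              rw [QuotientGroup.eq_one_iff]
              rw [Subgroup.mem_subgroupOf]
              exact ⟨γ, hγ, rfl⟩
            rw [h1]
            exact one_mem _
          · rw [Set.mem_singleton_iff] at hy
            subst hy
            have h1 : (⟨psiPerm, h'⟩ : G') = ψ' := rfl
            rw [h1]
            exact Subgroup.mem_zpowers q
        · intro h'
          have h1 : (⟨(1 : Equiv.Perm H3), h'⟩ : G') = 1 := rfl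
          rw [h1]
          simp only [QuotientGroup.mk_one]
          exact one_mem _
        · intro x y hx hy px py h'
          have h1 : (⟨x * y, h'⟩ : G') = ⟨x, hx⟩ * ⟨y, hy⟩ := rfl
          rw [h1, QuotientGroup.mk_mul]
          exact mul_mem (px hx) (py hy)
        · intro x hx px h'
          have h1 : (⟨x⁻¹, h'⟩ : G') = (⟨x, hx⟩ : G')⁻¹ := rfl
          rw [h1, QuotientGroup.mk_inv]
          exact inv_mem (px hx)
    have htop' : Subgroup.zpowers q = ⊤ := (Subgroup.eq_top_iff' _).mpr htop
    -- order of q is 4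
    have hq4 : q ^ 4 = 1 := by
      rw [hq, ← QuotientGroup.mk_pow, QuotientGroup.eq_one_iff, Subgroup.mem_subgroupOf]
      have h1 : ((ψ' ^ 4 : G') : Equiv.Perm H3) = psiPerm ^ 4 := rfl
      rw [h1, psi_pow_four]
      exact ⟨_, center_mem_N2l' l, rfl⟩
    have hq1 : q ≠ 1 := by
      intro h
      rw [hq, QuotientGroup.eq_one_iff, Subgroup.mem_subgroupOf] at h
      obtain ⟨γ, hγ, hγ2⟩ := h
      have e0 : Ltrans γ ((0:ℝ),(0:ℝ),(0:ℝ)) = psiPerm ((0:ℝ),(0:ℝ),(0:ℝ)) := by rw [hγ2]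
      have e1 : Ltrans γ ((1:ℝ),(0:ℝ),(0:ℝ)) = psiPerm ((1:ℝ),(0:ℝ),(0:ℝ)) := by rw [hγ2]
      simp only [Ltrans_apply, psiPerm_apply, Hmul, Prod.mk.injEq] at e0 e1
      have h0 := e0.1
      have h1 := e1.1
      norm_num at h0 h1
      linarith [h0, h1]
    have hq2 : q ^ 2 ≠ 1 := by
      intro h
      rw [hq, ← QuotientGroup.mk_pow, QuotientGroup.eq_one_iff, Subgroup.mem_subgroupOf] at h
      obtain ⟨γ, hγ, hγ2⟩ := h
      have hv : ((ψ' ^ 2 : G') : Equiv.Perm H3) = psiPerm * psiPerm := by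
        rw [Subgroup.coe_pow, pow_two]
      rw [hv] at hγ2
      have e0 : Ltrans γ ((0:ℝ),(0:ℝ),(0:ℝ)) = (psiPerm * psiPerm) ((0:ℝ),(0:ℝ),(0:ℝ)) := by
        rw [hγ2]
      have e1 : Ltrans γ ((1:ℝ),(0:ℝ),(0:ℝ)) = (psiPerm * psiPerm) ((1:ℝ),(0:ℝ),(0:ℝ)) := by
        rw [hγ2]
      simp only [Equiv.Perm.mul_apply, Ltrans_apply, psiPerm_apply, Hmul,
        Prod.mk.injEq] at e0 e1
      have h0 := e0.1
      have h1 := e1.1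
      norm_num at h0 h1
      linarith [h0, h1]
    have hord : orderOf q = 4 := by
      have hdvd : orderOf q ∣ 4 := orderOf_dvd_of_pow_eq_one hq4
      have hne0 : orderOf q ≠ 0 := by
        intro h
        rw [h] at hdvd
        exact absurd (Nat.eq_zero_of_zero_dvd hdvd) (by norm_num)
      have hle : orderOf q ≤ 4 := Nat.le_of_dvd (by norm_num) hdvd
      have hne1 : orderOf q ≠ 1 := by
        intro h
        exact hq1 (orderOf_eq_one_iff.mp h)
      have hne2 : orderOf q ≠ 2 := by
        intro h
        exact hq2 (h ▸ pow_orderOf_eq_one q)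
      interval_cases h : orderOf q <;> omega
    have hcard : Nat.card (G' ⧸ K) = 4 := by
      rw [← Subgroup.card_top (G := G' ⧸ K), ← htop', Nat.card_zpowers, hord]
    rw [Subgroup.index]
    exact hcard


end
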